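/- For κ ∈ (0,4), setting γ = √κ, one has for all d ∈ [0,1]: Φ_κ(d) = 2·Ψ_γ((1/2)·Ψ_γ⁻¹(d)), where Ψ_γ(x) = (1+γ²/4)x − (γ²/4)x², Ψ_γ⁻¹(d) = (4 + γ² − √((4+γ²)² − 16γ²d))/(2γ²) is the inverse of Ψ_γ taking values in [0,1], and Φ_κ(d) = (1/(32κ))·(4 + κ − √((4+κ)² − 16κd))·(12 + 3κ + √((4+κ)² − 16κd)). -/

import Mathlib

/-!
With `x = Ψ_γ⁻¹(d)` and `s` the square root in `Φ_κ`, `κ = γ²`, the two factors of `Φ_κ(d)` are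
`4 + κ - s = 2κx` and `12 + 3κ + s = 4(4 + κ) - 2κx`, so `Φ_κ(d) = (1 + κ/4)x - κx²/8`, which is
exactly `2Ψ_γ(x/2)`. The identity is thus purely algebraic: it holds for every value of the square root.
-/

noncomputable def Phi (κ d : ℝ) : ℝ :=
  (1 / (32 * κ)) * (4 + κ - Real.sqrt ((4 + κ)^2 - 16 * κ * d)) *
    (12 + 3 * κ + Real.sqrt ((4 + κ)^2 - 16 * κ * d))

noncomputable def Psi (γ x : ℝ) : ℝ := (1 + γ^2/4) * x - (γ^2/4) * x^2

noncomputable def PsiInv (γ d : ℝ) : ℝ :=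
  (4 + γ^2 - Real.sqrt ((4 + γ^2)^2 - 16 * γ^2 * d)) / (2 * γ^2)

theorem two_mul_Psi_half (γ x : ℝ) :
    2 * Psi γ ((1/2) * x) = (1 + γ^2/4) * x - γ^2/8 * x^2 := by
  unfold Psi
  ring

theorem Phi_sq_eq_quadratic_PsiInv (γ d : ℝ) (hγ : γ ≠ 0) :
    Phi (γ^2) d = (1 + γ^2/4) * PsiInv γ d - γ^2/8 * PsiInv γ d ^ 2 := by
  unfold Phi PsiInv
  field_simp
  ring

theorem Phi_as_KPZ_composition_general (κ d : ℝ) (hκ0 : 0 < κ) :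
    Phi κ d = 2 * Psi (Real.sqrt κ) ((1/2) * PsiInv (Real.sqrt κ) d) := by
  rw [two_mul_Psi_half, ← Phi_sq_eq_quadratic_PsiInv _ _ (Real.sqrt_ne_zero'.mpr hκ0),
    Real.sq_sqrt hκ0.le]

theorem Phi_as_KPZ_composition (κ d : ℝ) (hκ0 : 0 < κ) (hκ4 : κ < 4)
    (hd0 : 0 ≤ d) (hd1 : d ≤ 1) :
    Phi κ d = 2 * Psi (Real.sqrt κ) ((1/2) * PsiInv (Real.sqrt κ) d) :=
  Phi_as_KPZ_composition_general κ d hκ0
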